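/- arXiv:1005.4429 — 7 statements merged into one kernel-verified Lean document; each statement's English description precedes it below -/
import Mathlib

section
/- Let F be an invertible element of H ⊗ H satisfying the 2-cocycle condition F₁₂ · ((Δ ⊗ id)(F)) = F₂₃ · ((id ⊗ Δ)(F)). Then the twisted coproduct Δ^F(x) = F · Δ(x) · F⁻¹ is coassociative: for every x ∈ H, applying Δ^F to the first tensor factor of Δ^F(x) agrees (under the canonical associator identification of (H ⊗ H) ⊗ H with H ⊗ (H ⊗ H)) with applying Δ^F to the second tensor factor of Δ^F(x). -/
open TensorProduct

/-! `Δ^F ⊗ id` and `id ⊗ Δ^F` are `Δ ⊗ id` and `id ⊗ Δ` multiplied by `F ⊗ 1`, `F⁻¹ ⊗ 1` and by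
`1 ⊗ F`, `1 ⊗ F⁻¹`. Hence the two sides of coassociativity of `Δ^F` are `Φ · (Δ ⊗ id)Δ(x) · Φ⁻¹`
and `Φ' · (id ⊗ Δ)Δ(x) · Φ'⁻¹`, where `Φ = F₁₂ · (Δ ⊗ id)(F)` and `Φ' = F₂₃ · (id ⊗ Δ)(F)`.
Coassociativity of `Δ` identifies the middle factors and the cocycle condition says `Φ = Φ'`. -/

namespace TensorProduct

variable {R A B C : Type*} [CommRing R] [Ring A] [Ring B] [Ring C]
  [Algebra R A] [Algebra R B] [Algebra R C]

theorem map_id_apply_of_eq_mul_mul (f : A →ₐ[R] B) (φ : A →ₗ[R] B) (u v : B)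
    (hφ : ∀ a, φ a = u * f a * v) (y : A ⊗[R] C) :
    map φ LinearMap.id y =
      (u ⊗ₜ 1) * Algebra.TensorProduct.map f (AlgHom.id R C) y * (v ⊗ₜ 1) := by
  induction y using TensorProduct.induction_on with
  | zero => simp
  | tmul a c => simp [hφ, Algebra.TensorProduct.tmul_mul_tmul]
  | add y z hy hz => simp only [map_add, hy, hz, mul_add, add_mul]

theorem id_map_apply_of_eq_mul_mul (f : A →ₐ[R] B) (φ : A →ₗ[R] B) (u v : B)
    (hφ : ∀ a, φ a = u * f a * v) (y : C ⊗[R] A) :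
    map LinearMap.id φ y =
      (1 ⊗ₜ u) * Algebra.TensorProduct.map (AlgHom.id R C) f y * (1 ⊗ₜ v) := by
  induction y using TensorProduct.induction_on with
  | zero => simp
  | tmul c a => simp [hφ, Algebra.TensorProduct.tmul_mul_tmul]
  | add y z hy hz => simp only [map_add, hy, hz, mul_add, add_mul]

end TensorProduct

theorem inv_rev_eq_of_mul_eq {M : Type*} [Monoid M] {a b c d a' b' c' d' : M}
    (h : a * b = c * d) (ha : a * a' = 1) (hb : b * b' = 1) (hc : c' * c = 1)
    (hd : d' * d = 1) : b' * a' = d' * c' := by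
  have hleft : d' * c' * (a * b) = 1 := by rw [h, mul_assoc, ← mul_assoc c', hc, one_mul, hd]
  have hright : a * b * (b' * a') = 1 := by rw [mul_assoc, ← mul_assoc b, hb, one_mul, ha]
  exact (left_inv_eq_right_inv hleft hright).symm

/-- If an invertible `F ∈ H ⊗ H` satisfies the 2-cocycle condition, then the
twisted coproduct `Δ^F(x) = F · Δ(x) · F⁻¹` is coassociative: applying `Δ^F` to the first
tensor factor of `Δ^F(x)` agrees, under the canonical associator, with applying `Δ^F` to the
second tensor factor. -/
theorem twisted_coproduct_coassociative {R H : Type*} [CommRing R] [Ring H] [Bialgebra R H]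
    (F Finv : H ⊗[R] H)
    (hF1 : F * Finv = 1) (hF2 : Finv * F = 1)
    (hcocycle :
      (Algebra.TensorProduct.assoc R R R H H H) (F ⊗ₜ (1 : H)) *
        ((Algebra.TensorProduct.assoc R R R H H H).toAlgHom.comp
          (Algebra.TensorProduct.map (Bialgebra.comulAlgHom R H) (AlgHom.id R H))) F =
      ((1 : H) ⊗ₜ F) *
        (Algebra.TensorProduct.map (AlgHom.id R H) (Bialgebra.comulAlgHom R H)) F)
    (DeltaF : H →ₗ[R] H ⊗[R] H)
    (hDeltaF : ∀ x : H, DeltaF x = F * Coalgebra.comul x * Finv) :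
    ∀ x : H,
      (TensorProduct.assoc R H H H)
          ((TensorProduct.map DeltaF LinearMap.id) (DeltaF x)) =
        (TensorProduct.map LinearMap.id DeltaF) (DeltaF x) := by
  intro x
  set α := Algebra.TensorProduct.assoc R R R H H H
  set Δl := Algebra.TensorProduct.map (Bialgebra.comulAlgHom R H) (AlgHom.id R H)
  set Δr := Algebra.TensorProduct.map (AlgHom.id R H) (Bialgebra.comulAlgHom R H)
  have hcoassoc : α (Δl (Coalgebra.comul x)) = Δr (Coalgebra.comul x) :=
    Coalgebra.coassoc_apply x
  have hinv : α (Δl Finv) * α (Finv ⊗ₜ 1) = Δr Finv * (1 ⊗ₜ Finv) :=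
    inv_rev_eq_of_mul_eq hcocycle
      (by rw [← map_mul, Algebra.TensorProduct.tmul_mul_tmul, hF1, mul_one,
        ← Algebra.TensorProduct.one_def, map_one])
      (by simp [← map_mul, hF1])
      (by simp [Algebra.TensorProduct.tmul_mul_tmul, hF2, Algebra.TensorProduct.one_def])
      (by simp [← map_mul, hF2])
  calc α (map DeltaF LinearMap.id (DeltaF x))
      = (α (F ⊗ₜ 1) * α (Δl F)) * α (Δl (Coalgebra.comul x)) *
          (α (Δl Finv) * α (Finv ⊗ₜ 1)) := by
        rw [map_id_apply_of_eq_mul_mul (Bialgebra.comulAlgHom R H) _ _ _ hDeltaF, hDeltaF]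
        simp only [map_mul, mul_assoc]
        rfl
    _ = ((1 ⊗ₜ F) * Δr F) * Δr (Coalgebra.comul x) * (Δr Finv * (1 ⊗ₜ Finv)) := by
        rw [← hinv, hcoassoc]; exact congrArg (· * _ * _) hcocycle
    _ = map LinearMap.id DeltaF (DeltaF x) := by
        rw [id_map_apply_of_eq_mul_mul (Bialgebra.comulAlgHom R H) _ _ _ hDeltaF, hDeltaF]
        simp only [map_mul, mul_assoc]
        rfl
end

section
/- Let H be a Hopf algebra with antipode S and let F ∈ H ⊗ H be an invertible element satisfying the 2-cocycle and normalization conditions. Write F = Σ fᵅ ⊗ f_α and F⁻¹ = Σ f̄ᵅ ⊗ f̄_α, and define the Drinfeld element u := Σ fᵅ · S(f_α) (that is, u = m((id ⊗ S)(F)), where m is the multiplication of H) and v := Σ S(f̄ᵅ) · f̄_α = m((S ⊗ id)(F⁻¹)). Then u · v = 1 = v · u; in particular u is invertible with u⁻¹ = v. -/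
/-!
Apply `x ⊗ y ⊗ z ↦ x S(y) z` to the rearranged cocycle identity
`F₂₃⁻¹ F₁₂ = (id ⊗ Δ)(F) · (Δ ⊗ id)(F⁻¹)`. Since `S` is an antimorphism, the left side is sent
to `u v`; on the right side the antipode axiom collapses the middle factors to counits, leaving
`(id ⊗ ε)(F) · (ε ⊗ id)(F⁻¹) = 1`. Symmetrically, `x ⊗ y ⊗ z ↦ S(x) y S(z)` sends
`(Δ ⊗ id)(F) · (id ⊗ Δ)(F⁻¹) = F₁₂⁻¹ F₂₃` to `1 = v u`.
-/

open TensorProduct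

theorem inv_mul_eq_mul_inv_of_mul_eq_mul {M : Type*} [Monoid M] {a b c d b' c' : M}
    (h : a * c = b * d) (hb : b' * b = 1) (hc : c * c' = 1) : b' * a = d * c' :=
  calc b' * a = b' * (a * c) * c' := by rw [mul_assoc, mul_assoc, hc, mul_one]
    _ = d * c' := by rw [h, ← mul_assoc, hb, one_mul]

section Normalization

variable {R H : Type*} [CommSemiring R] [Semiring H] [Bialgebra R H]

lemma lid_map_counit_mul (X Y : H ⊗[R] H) :
    TensorProduct.lid R H (map (Coalgebra.counit (R := R)) LinearMap.id (X * Y)) =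
      TensorProduct.lid R H (map (Coalgebra.counit (R := R)) LinearMap.id X) *
        TensorProduct.lid R H (map (Coalgebra.counit (R := R)) LinearMap.id Y) := by
  induction X using TensorProduct.induction_on with
  | zero => simp
  | add X₁ X₂ h₁ h₂ => simp only [add_mul, map_add, h₁, h₂]
  | tmul x₁ x₂ =>
    induction Y using TensorProduct.induction_on with
    | zero => simp
    | add Y₁ Y₂ h₁ h₂ => simp only [mul_add, map_add, h₁, h₂]
    | tmul y₁ y₂ => simp [smul_smul, mul_comm]

lemma rid_map_counit_mul (X Y : H ⊗[R] H) :
    TensorProduct.rid R H (map LinearMap.id (Coalgebra.counit (R := R)) (X * Y)) =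
      TensorProduct.rid R H (map LinearMap.id (Coalgebra.counit (R := R)) X) *
        TensorProduct.rid R H (map LinearMap.id (Coalgebra.counit (R := R)) Y) := by
  induction X using TensorProduct.induction_on with
  | zero => simp
  | add X₁ X₂ h₁ h₂ => simp only [add_mul, map_add, h₁, h₂]
  | tmul x₁ x₂ =>
    induction Y using TensorProduct.induction_on with
    | zero => simp
    | add Y₁ Y₂ h₁ h₂ => simp only [mul_add, map_add, h₁, h₂]
    | tmul y₁ y₂ => simp [smul_smul, mul_comm]

lemma lid_map_counit_eq_one_of_mul_eq_one {F G : H ⊗[R] H} (hGF : G * F = 1)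
    (hF : TensorProduct.lid R H (map (Coalgebra.counit (R := R)) LinearMap.id F) = 1) :
    TensorProduct.lid R H (map (Coalgebra.counit (R := R)) LinearMap.id G) = 1 := by
  simpa [lid_map_counit_mul, hF, Algebra.TensorProduct.one_def] using
    congr(TensorProduct.lid R H (map (Coalgebra.counit (R := R)) LinearMap.id $hGF))

lemma rid_map_counit_eq_one_of_mul_eq_one {F G : H ⊗[R] H} (hGF : G * F = 1)
    (hF : TensorProduct.rid R H (map LinearMap.id (Coalgebra.counit (R := R)) F) = 1) :
    TensorProduct.rid R H (map LinearMap.id (Coalgebra.counit (R := R)) G) = 1 := by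
  simpa [rid_map_counit_mul, hF, Algebra.TensorProduct.one_def] using
    congr(TensorProduct.rid R H (map LinearMap.id (Coalgebra.counit (R := R)) $hGF))

end Normalization

namespace HopfAlgebra

variable {R H : Type*} [CommSemiring R] [Semiring H] [HopfAlgebra R H]

def mulAntipodeMul : H ⊗[R] (H ⊗[R] H) →ₗ[R] H :=
  LinearMap.mul' R H ∘ₗ (LinearMap.mul' R H ∘ₗ (antipode R).rTensor H).lTensor H

def antipodeMulAntipode : H ⊗[R] (H ⊗[R] H) →ₗ[R] H :=
  LinearMap.mul' R H ∘ₗ map (antipode R) (LinearMap.mul' R H ∘ₗ (antipode R).lTensor H)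

@[simp]
lemma mulAntipodeMul_tmul (x y z : H) :
    mulAntipodeMul (R := R) (x ⊗ₜ (y ⊗ₜ z)) = x * (antipode R y * z) := by
  simp [mulAntipodeMul]

@[simp]
lemma antipodeMulAntipode_tmul (x y z : H) :
    antipodeMulAntipode (R := R) (x ⊗ₜ (y ⊗ₜ z)) = antipode R x * (y * antipode R z) := by
  simp [antipodeMulAntipode]

lemma mulAntipodeMul_tmul_mul_assoc (a d : H) (P Q : H ⊗[R] H) :
    mulAntipodeMul ((a ⊗ₜ P) * Algebra.TensorProduct.assoc R R R H H H (Q ⊗ₜ d)) =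
      a * LinearMap.mul' R H ((antipode R).lTensor H Q) *
        LinearMap.mul' R H ((antipode R).rTensor H P) * d := by
  induction P using TensorProduct.induction_on with
  | zero => simp
  | add P₁ P₂ h₁ h₂ => simp only [tmul_add, add_mul, map_add, h₁, h₂, mul_add]
  | tmul p₁ p₂ =>
    induction Q using TensorProduct.induction_on with
    | zero => simp
    | add Q₁ Q₂ h₁ h₂ => simp only [add_tmul, map_add, mul_add, h₁, h₂, add_mul]
    | tmul q₁ q₂ => simp [antipode_mul_antidistrib, mul_assoc]

lemma antipodeMulAntipode_assoc_mul_tmul (a d : H) (P Q : H ⊗[R] H) :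
    antipodeMulAntipode (Algebra.TensorProduct.assoc R R R H H H (P ⊗ₜ d) * (a ⊗ₜ Q)) =
      antipode R a * LinearMap.mul' R H ((antipode R).rTensor H P) *
        LinearMap.mul' R H ((antipode R).lTensor H Q) * antipode R d := by
  induction P using TensorProduct.induction_on with
  | zero => simp
  | add P₁ P₂ h₁ h₂ => simp only [add_tmul, map_add, add_mul, h₁, h₂, mul_add]
  | tmul p₁ p₂ =>
    induction Q using TensorProduct.induction_on with
    | zero => simp
    | add Q₁ Q₂ h₁ h₂ => simp only [tmul_add, map_add, mul_add, h₁, h₂, add_mul]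
    | tmul q₁ q₂ => simp [antipode_mul_antidistrib, mul_assoc]

lemma mulAntipodeMul_comul_mul_comul (X Y : H ⊗[R] H) :
    mulAntipodeMul
        (Algebra.TensorProduct.map (AlgHom.id R H) (Bialgebra.comulAlgHom R H) X *
          ((Algebra.TensorProduct.assoc R R R H H H).toAlgHom.comp
            (Algebra.TensorProduct.map (Bialgebra.comulAlgHom R H) (AlgHom.id R H))) Y) =
      TensorProduct.rid R H (map LinearMap.id (Coalgebra.counit (R := R)) X) *
        TensorProduct.lid R H (map (Coalgebra.counit (R := R)) LinearMap.id Y) := by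
  induction X using TensorProduct.induction_on with
  | zero => simp
  | add X₁ X₂ h₁ h₂ => simp only [map_add, add_mul, h₁, h₂]
  | tmul x₁ x₂ =>
    induction Y using TensorProduct.induction_on with
    | zero => simp
    | add Y₁ Y₂ h₁ h₂ => simp only [map_add, mul_add, h₁, h₂]
    | tmul y₁ y₂ =>
      simp only [Algebra.TensorProduct.map_tmul, AlgHom.coe_id, id_eq,
        Bialgebra.comulAlgHom_apply, AlgHom.coe_comp, AlgEquiv.coe_toAlgHom, Function.comp_apply,
        mulAntipodeMul_tmul_mul_assoc, mul_antipode_lTensor_comul_apply,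
        mul_antipode_rTensor_comul_apply, map_tmul, LinearMap.id_coe, rid_tmul, lid_tmul,
        Algebra.mul_smul_comm, Algebra.smul_mul_assoc]
      simp only [mul_assoc, ← Algebra.smul_def, mul_smul_comm, smul_mul_assoc]

lemma antipodeMulAntipode_comul_mul_comul (X Y : H ⊗[R] H) :
    antipodeMulAntipode
        (((Algebra.TensorProduct.assoc R R R H H H).toAlgHom.comp
            (Algebra.TensorProduct.map (Bialgebra.comulAlgHom R H) (AlgHom.id R H))) Y *
          Algebra.TensorProduct.map (AlgHom.id R H) (Bialgebra.comulAlgHom R H) X) =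
      antipode R (TensorProduct.rid R H (map LinearMap.id (Coalgebra.counit (R := R)) X)) *
        antipode R (TensorProduct.lid R H (map (Coalgebra.counit (R := R)) LinearMap.id Y)) := by
  induction X using TensorProduct.induction_on with
  | zero => simp
  | add X₁ X₂ h₁ h₂ => simp only [map_add, mul_add, h₁, h₂, add_mul]
  | tmul x₁ x₂ =>
    induction Y using TensorProduct.induction_on with
    | zero => simp
    | add Y₁ Y₂ h₁ h₂ => simp only [map_add, add_mul, h₁, h₂, mul_add]
    | tmul y₁ y₂ =>
      simp only [AlgHom.coe_comp, AlgEquiv.coe_toAlgHom, Function.comp_apply,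
        Algebra.TensorProduct.map_tmul, Bialgebra.comulAlgHom_apply, AlgHom.coe_id, id_eq,
        antipodeMulAntipode_assoc_mul_tmul, mul_antipode_rTensor_comul_apply,
        mul_antipode_lTensor_comul_apply, map_tmul, LinearMap.id_coe, rid_tmul, map_smul,
        lid_tmul, Algebra.mul_smul_comm, Algebra.smul_mul_assoc]
      simp only [mul_assoc, ← Algebra.smul_def, mul_smul_comm, smul_mul_assoc]

end HopfAlgebra

/-- Let `H` be a Hopf algebra with antipode `S` and `F ∈ H ⊗ H` an invertible
element satisfying the 2-cocycle and normalization conditions. Then the Drinfeld element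
`u = m((id ⊗ S)(F))` and `v = m((S ⊗ id)(F⁻¹))` satisfy `u·v = 1 = v·u`; in particular `u` is
invertible with `u⁻¹ = v`. -/
theorem drinfeld_element_invertible {R H : Type*} [CommRing R] [Ring H] [HopfAlgebra R H]
    (F Finv : H ⊗[R] H)
    (hF1 : F * Finv = 1) (hF2 : Finv * F = 1)
    (hcocycle :
      (Algebra.TensorProduct.assoc R R R H H H) (F ⊗ₜ (1 : H)) *
        ((Algebra.TensorProduct.assoc R R R H H H).toAlgHom.comp
          (Algebra.TensorProduct.map (Bialgebra.comulAlgHom R H) (AlgHom.id R H))) F =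
      ((1 : H) ⊗ₜ F) *
        (Algebra.TensorProduct.map (AlgHom.id R H) (Bialgebra.comulAlgHom R H)) F)
    (hnorm1 : (TensorProduct.lid R H)
        ((TensorProduct.map (Coalgebra.counit (R := R)) LinearMap.id) F) = 1)
    (hnorm2 : (TensorProduct.rid R H)
        ((TensorProduct.map LinearMap.id (Coalgebra.counit (R := R))) F) = 1)
    (u v : H)
    (hu : u = LinearMap.mul' R H
      ((TensorProduct.map LinearMap.id (HopfAlgebra.antipode (R := R))) F))
    (hv : v = LinearMap.mul' R H
      ((TensorProduct.map (HopfAlgebra.antipode (R := R)) LinearMap.id) Finv)) :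
    u * v = 1 ∧ v * u = 1 := by
  have h₁₂ : Algebra.TensorProduct.assoc R R R H H H (Finv ⊗ₜ 1) *
      Algebra.TensorProduct.assoc R R R H H H (F ⊗ₜ 1) = 1 := by
    rw [← map_mul, Algebra.TensorProduct.tmul_mul_tmul, hF2, mul_one,
      ← Algebra.TensorProduct.one_def, map_one]
  have h₂₃ : ((1 : H) ⊗ₜ[R] Finv) * (1 ⊗ₜ F) = 1 := by
    rw [Algebra.TensorProduct.tmul_mul_tmul, hF2, mul_one, ← Algebra.TensorProduct.one_def]
  subst hu hv
  constructor
  · have key := congr(HopfAlgebra.mulAntipodeMul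
      $(inv_mul_eq_mul_inv_of_mul_eq_mul hcocycle h₂₃ (by rw [← map_mul, hF1, map_one])))
    rwa [HopfAlgebra.mulAntipodeMul_tmul_mul_assoc, HopfAlgebra.mulAntipodeMul_comul_mul_comul,
      hnorm2, lid_map_counit_eq_one_of_mul_eq_one hF2 hnorm1, one_mul, mul_one, one_mul] at key
  · have key := congr(HopfAlgebra.antipodeMulAntipode
      $(inv_mul_eq_mul_inv_of_mul_eq_mul hcocycle.symm h₁₂ (by rw [← map_mul, hF1, map_one])))
    rwa [HopfAlgebra.antipodeMulAntipode_assoc_mul_tmul,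
      HopfAlgebra.antipodeMulAntipode_comul_mul_comul, hnorm1,
      rid_map_counit_eq_one_of_mul_eq_one hF2 hnorm2, HopfAlgebra.antipode_one, one_mul, mul_one,
      mul_one] at key
end

section
/- Let H be a Hopf algebra with antipode S and let F ∈ H ⊗ H be an invertible element satisfying the 2-cocycle and normalization conditions. Let u = m((id ⊗ S)(F)) be the Drinfeld element (which is invertible, with u⁻¹ = m((S ⊗ id)(F⁻¹))), and define the twisted antipode S^F(x) := u · S(x) · u⁻¹. Then S^F is an antipode for the twisted bialgebra (H, Δ^F, ε): for every x ∈ H, m((S^F ⊗ id)(Δ^F(x))) = ε(x)·1 and m((id ⊗ S^F)(Δ^F(x))) = ε(x)·1. -/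
/-!
Let `H ⊗ H` act on `H` from the right by `c ◃ (a ⊗ b) = S a * c * b` and from the left by
`(a ⊗ b) ▹ c = a * c * S b`; since `S` is an anti-homomorphism these are genuine actions of the
algebra `H ⊗ H`. In these terms `u⁻¹ = 1 ◃ F⁻¹` and `u = F ▹ 1`, so `u⁻¹ ◃ F = 1 ◃ (F⁻¹ F) = 1`
and `F⁻¹ ▹ u = 1`, while the antipode axioms read `1 ◃ Δ x = ε x = Δ x ▹ 1`. Hence
`m((S^F ⊗ id)(F Δ x F⁻¹)) = u * (u⁻¹ ◃ F ◃ Δ x ◃ F⁻¹) = ε x • u * u⁻¹`, and symmetrically on the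
other side.
-/

open TensorProduct Coalgebra HopfAlgebra

namespace HopfAlgebra

variable {R H : Type*} [CommSemiring R] [Semiring H] [HopfAlgebra R H]

noncomputable def sandwichAntipodeLeft : H ⊗[R] H →ₗ[R] Module.End R H :=
  TensorProduct.lift <| LinearMap.mk₂ R
    (fun a b => LinearMap.mulRight R b ∘ₗ LinearMap.mulLeft R (antipode R a))
    (fun a a' b => by ext c; simp [add_mul])
    (fun r a b => by ext c; simp)
    (fun a b b' => by ext c; simp [mul_add])
    (fun r a b => by ext c; simp)

noncomputable def sandwichAntipodeRight : H ⊗[R] H →ₗ[R] Module.End R H :=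
  TensorProduct.lift <| LinearMap.mk₂ R
    (fun a b => LinearMap.mulRight R (antipode R b) ∘ₗ LinearMap.mulLeft R a)
    (fun a a' b => by ext c; simp [add_mul])
    (fun r a b => by ext c; simp)
    (fun a b b' => by ext c; simp [mul_add])
    (fun r a b => by ext c; simp)

@[simp]
lemma sandwichAntipodeLeft_tmul (a b c : H) :
    sandwichAntipodeLeft (R := R) (a ⊗ₜ b) c = antipode R a * c * b := rfl

@[simp]
lemma sandwichAntipodeRight_tmul (a b c : H) :
    sandwichAntipodeRight (R := R) (a ⊗ₜ b) c = a * c * antipode R b := rfl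

lemma sandwichAntipodeLeft_mul (y z : H ⊗[R] H) (c : H) :
    sandwichAntipodeLeft (y * z) c = sandwichAntipodeLeft z (sandwichAntipodeLeft y c) := by
  induction y using TensorProduct.induction_on with
  | zero => simp
  | add y y' hy hy' => simp [add_mul, hy, hy']
  | tmul a b =>
    induction z using TensorProduct.induction_on with
    | zero => simp
    | add z z' hz hz' => simp [mul_add, hz, hz']
    | tmul a' b' =>
      simp [Algebra.TensorProduct.tmul_mul_tmul, antipode_mul_antidistrib, mul_assoc]

lemma sandwichAntipodeRight_mul (y z : H ⊗[R] H) (c : H) :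
    sandwichAntipodeRight (y * z) c = sandwichAntipodeRight y (sandwichAntipodeRight z c) := by
  induction y using TensorProduct.induction_on with
  | zero => simp
  | add y y' hy hy' => simp [add_mul, hy, hy']
  | tmul a b =>
    induction z using TensorProduct.induction_on with
    | zero => simp
    | add z z' hz hz' => simp [mul_add, add_mul, hz, hz']
    | tmul a' b' =>
      simp [Algebra.TensorProduct.tmul_mul_tmul, antipode_mul_antidistrib, mul_assoc]

@[simp]
lemma sandwichAntipodeLeft_one (c : H) : sandwichAntipodeLeft (R := R) (1 : H ⊗[R] H) c = c := by
  simp [Algebra.TensorProduct.one_def]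

@[simp]
lemma sandwichAntipodeRight_one (c : H) :
    sandwichAntipodeRight (R := R) (1 : H ⊗[R] H) c = c := by
  simp [Algebra.TensorProduct.one_def]

lemma mul'_map_antipode_id (y : H ⊗[R] H) :
    LinearMap.mul' R H (map (antipode R) LinearMap.id y) = sandwichAntipodeLeft y 1 := by
  induction y using TensorProduct.induction_on with
  | zero => simp
  | add y y' hy hy' => simp [hy, hy']
  | tmul a b => simp

lemma mul'_map_id_antipode (y : H ⊗[R] H) :
    LinearMap.mul' R H (map LinearMap.id (antipode R) y) = sandwichAntipodeRight y 1 := by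
  induction y using TensorProduct.induction_on with
  | zero => simp
  | add y y' hy hy' => simp [hy, hy']
  | tmul a b => simp

lemma sandwichAntipodeLeft_comul_one (x : H) :
    sandwichAntipodeLeft (comul (R := R) x) 1 = counit (R := R) x • (1 : H) := by
  rw [← mul'_map_antipode_id, ← LinearMap.rTensor_def, mul_antipode_rTensor_comul_apply,
    Algebra.algebraMap_eq_smul_one]

lemma sandwichAntipodeRight_comul_one (x : H) :
    sandwichAntipodeRight (comul (R := R) x) 1 = counit (R := R) x • (1 : H) := by
  rw [← mul'_map_id_antipode, ← LinearMap.lTensor_def, mul_antipode_lTensor_comul_apply,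
    Algebra.algebraMap_eq_smul_one]

lemma mul'_map_id_eq_sandwichAntipodeLeft {u v : H} {f : H →ₗ[R] H}
    (hf : ∀ x, f x = u * antipode R x * v) (y : H ⊗[R] H) :
    LinearMap.mul' R H (map f LinearMap.id y) = u * sandwichAntipodeLeft y v := by
  induction y using TensorProduct.induction_on with
  | zero => simp
  | add y y' hy hy' => simp [hy, hy', mul_add]
  | tmul a b => simp [hf, mul_assoc]

lemma mul'_map_id_eq_sandwichAntipodeRight {u v : H} {f : H →ₗ[R] H}
    (hf : ∀ x, f x = u * antipode R x * v) (y : H ⊗[R] H) :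
    LinearMap.mul' R H (map LinearMap.id f y) = sandwichAntipodeRight y u * v := by
  induction y using TensorProduct.induction_on with
  | zero => simp
  | add y y' hy hy' => simp [hy, hy', add_mul]
  | tmul a b => simp [hf, mul_assoc]

end HopfAlgebra

theorem twisted_antipode_general {R H : Type*} [CommRing R] [Ring H] [HopfAlgebra R H]
    (F Finv : H ⊗[R] H)
    (hF2 : Finv * F = 1)
    (u v : H)
    (hu : u = LinearMap.mul' R H
      ((TensorProduct.map LinearMap.id (HopfAlgebra.antipode (R := R))) F))
    (hv : v = LinearMap.mul' R H
      ((TensorProduct.map (HopfAlgebra.antipode (R := R)) LinearMap.id) Finv))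
    (huv : u * v = 1)
    (SF : H →ₗ[R] H)
    (hSF : ∀ x : H, SF x = u * HopfAlgebra.antipode (R := R) x * v) :
    ∀ x : H,
      LinearMap.mul' R H
          ((TensorProduct.map SF LinearMap.id) (F * Coalgebra.comul x * Finv)) =
        Coalgebra.counit (R := R) x • (1 : H) ∧
      LinearMap.mul' R H
          ((TensorProduct.map LinearMap.id SF) (F * Coalgebra.comul x * Finv)) =
        Coalgebra.counit (R := R) x • (1 : H) := by
  rw [mul'_map_antipode_id] at hv
  rw [mul'_map_id_antipode] at hu
  have hvF : sandwichAntipodeLeft F v = 1 := by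
    rw [hv, ← sandwichAntipodeLeft_mul, hF2, sandwichAntipodeLeft_one]
  have hFinvu : sandwichAntipodeRight Finv u = 1 := by
    rw [hu, ← sandwichAntipodeRight_mul, hF2, sandwichAntipodeRight_one]
  intro x
  constructor
  · rw [mul'_map_id_eq_sandwichAntipodeLeft hSF, sandwichAntipodeLeft_mul,
      sandwichAntipodeLeft_mul, hvF, sandwichAntipodeLeft_comul_one, map_smul, ← hv,
      mul_smul_comm, huv]
  · rw [mul'_map_id_eq_sandwichAntipodeRight hSF, sandwichAntipodeRight_mul,
      sandwichAntipodeRight_mul, hFinvu, sandwichAntipodeRight_comul_one, map_smul, ← hu,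
      smul_mul_assoc, huv]

/-- Let `H` be a Hopf algebra with antipode `S`, `F ∈ H ⊗ H` an invertible
element satisfying the 2-cocycle and normalization conditions, and let
`u = m((id ⊗ S)(F))` be the Drinfeld element, invertible with `u⁻¹ = v = m((S ⊗ id)(F⁻¹))`.
Then the twisted antipode `S^F(x) = u · S(x) · u⁻¹` is an antipode for the twisted bialgebra
`(H, Δ^F, ε)`: `m((S^F ⊗ id)(Δ^F(x))) = ε(x)·1` and `m((id ⊗ S^F)(Δ^F(x))) = ε(x)·1`. -/
theorem twisted_antipode {R H : Type*} [CommRing R] [Ring H] [HopfAlgebra R H]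
    (F Finv : H ⊗[R] H)
    (hF1 : F * Finv = 1) (hF2 : Finv * F = 1)
    (hcocycle :
      (Algebra.TensorProduct.assoc R R R H H H) (F ⊗ₜ (1 : H)) *
        ((Algebra.TensorProduct.assoc R R R H H H).toAlgHom.comp
          (Algebra.TensorProduct.map (Bialgebra.comulAlgHom R H) (AlgHom.id R H))) F =
      ((1 : H) ⊗ₜ F) *
        (Algebra.TensorProduct.map (AlgHom.id R H) (Bialgebra.comulAlgHom R H)) F)
    (hnorm1 : (TensorProduct.lid R H)
        ((TensorProduct.map (Coalgebra.counit (R := R)) LinearMap.id) F) = 1)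
    (hnorm2 : (TensorProduct.rid R H)
        ((TensorProduct.map LinearMap.id (Coalgebra.counit (R := R))) F) = 1)
    (u v : H)
    (hu : u = LinearMap.mul' R H
      ((TensorProduct.map LinearMap.id (HopfAlgebra.antipode (R := R))) F))
    (hv : v = LinearMap.mul' R H
      ((TensorProduct.map (HopfAlgebra.antipode (R := R)) LinearMap.id) Finv))
    (huv : u * v = 1) (hvu : v * u = 1)
    (SF : H →ₗ[R] H)
    (hSF : ∀ x : H, SF x = u * HopfAlgebra.antipode (R := R) x * v) :
    ∀ x : H,
      LinearMap.mul' R H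
          ((TensorProduct.map SF LinearMap.id) (F * Coalgebra.comul x * Finv)) =
        Coalgebra.counit (R := R) x • (1 : H) ∧
      LinearMap.mul' R H
          ((TensorProduct.map LinearMap.id SF) (F * Coalgebra.comul x * Finv)) =
        Coalgebra.counit (R := R) x • (1 : H) :=
  twisted_antipode_general F Finv hF2 u v hu hv huv SF hSF
end

section
/- Fix n ≥ 2 and complex parameters h, s. On the polynomial algebra A = ℂ[x⁰, …, x^{n-1}] define the operators X̂⁰ := M₀ − h·s·Σ_{k=1}^{n-1} M_k ∘ P_k and X̂ʲ := M_j ∘ T_c for j = 1, …, n−1, where c := −i(1−s)h (so that T_c realizes the formal operator e^{(1−s)h P₀}). Then these operators satisfy the κ-Minkowski commutation relations: [X̂⁰, X̂ʲ] = i·h·X̂ʲ and [X̂ʲ, X̂ᵏ] = 0 for all j, k ∈ {1, …, n−1}. (This is the Heisenberg realization of κ-Minkowski spacetime arising from the one-parameter Abelian family of twists.) -/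
open MvPolynomial

/-- Multiplication operator by the variable `x^μ` on `ℂ[x⁰, …, x^{n-1}]`. -/
noncomputable def Mop {n : ℕ} (μ : Fin n) : Module.End ℂ (MvPolynomial (Fin n) ℂ) :=
  LinearMap.mulLeft ℂ (MvPolynomial.X μ)

/-- Momentum operator `P_μ = −i·∂_μ` on `ℂ[x⁰, …, x^{n-1}]`. -/
noncomputable def Pop {n : ℕ} (μ : Fin n) : Module.End ℂ (MvPolynomial (Fin n) ℂ) :=
  (-Complex.I) • (MvPolynomial.pderiv μ).toLinearMap

/-- The shift operator `T_c = e^{c∂₀}`: the algebra endomorphism of `ℂ[x⁰, …, x^{n-1}]`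
substituting `x⁰ ↦ x⁰ + c` (where `z` is the index of the time variable `x⁰`)
and fixing the other variables. -/
noncomputable def Tshift {n : ℕ} (z : Fin n) (c : ℂ) : Module.End ℂ (MvPolynomial (Fin n) ℂ) :=
  (MvPolynomial.aeval fun i : Fin n =>
    if i = z then MvPolynomial.X z + MvPolynomial.C c else MvPolynomial.X i).toLinearMap

/-- Abelian-twist realization of the κ-Minkowski time coordinate:
`X̂⁰ = M₀ − h·s·Σ_{k≠0} M_k ∘ P_k` (i.e. `x̂⁰ = x⁰ − h s x^k P_k`). -/
noncomputable def abXhatTime {n : ℕ} (z : Fin n) (h s : ℂ) :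
    Module.End ℂ (MvPolynomial (Fin n) ℂ) :=
  Mop z - (h * s) • ∑ k ∈ ({z}ᶜ : Finset (Fin n)), (Mop k ∘ₗ Pop k)

/-- Abelian-twist realization of the κ-Minkowski space coordinates:
`X̂ʲ = M_j ∘ T_c` with `c = −i(1−s)h`, realizing `x̂ʲ = x^j e^{(1−s)h P₀}`. -/
noncomputable def abXhatSpace {n : ℕ} (z : Fin n) (h s : ℂ) (j : Fin n) :
    Module.End ℂ (MvPolynomial (Fin n) ℂ) :=
  Mop j ∘ₗ Tshift z (-Complex.I * (1 - s) * h)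

/-! Write `E = Σ_{k ≠ 0} x^k ∂_k`, so that `X̂⁰ = M₀ + i h s E`. The translation `T_c` commutes
with every `∂_k` and every spatial `M_k`, hence with `E`, while `T_c M₀ = (M₀ + c) T_c`.
Together with `E M_j = M_j (1 + E)` for spatial `j`, this gives
`[X̂⁰, X̂ʲ] = (i h s − c) X̂ʲ = i h X̂ʲ`, since `−c = i(1 − s)h`.
The `X̂ʲ` commute because `T_c` commutes with the spatial `M_k`. -/

section Euler

variable {R σ : Type*} [CommSemiring R]

noncomputable def eulerOp (t : Finset σ) : Module.End R (MvPolynomial σ R) :=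
  ∑ k ∈ t, LinearMap.mulLeft R (X k) ∘ₗ (pderiv k).toLinearMap

theorem eulerOp_apply (t : Finset σ) (p : MvPolynomial σ R) :
    eulerOp t p = ∑ k ∈ t, X k * pderiv k p := by
  simp [eulerOp]

theorem eulerOp_X_mul [DecidableEq σ] {t : Finset σ} {j : σ} (hj : j ∈ t) (q : MvPolynomial σ R) :
    eulerOp t (X j * q) = X j * q + X j * eulerOp t q := by
  have hterm (k : σ) : X k * pderiv k (X j * q) =
      (if k = j then X j * q else 0) + X j * (X k * pderiv k q) := by
    rw [pderiv_mul]
    by_cases hkj : k = j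
    · subst hkj; rw [pderiv_X_self, if_pos rfl]; ring
    · rw [pderiv_X_of_ne (Ne.symm hkj), if_neg hkj]; ring
  simp only [eulerOp_apply, hterm, Finset.sum_add_distrib, Finset.sum_ite_eq', if_pos hj,
    Finset.mul_sum]

end Euler

section Shift

variable {n : ℕ} (z : Fin n) (c : ℂ)

theorem Tshift_apply (p : MvPolynomial (Fin n) ℂ) :
    Tshift z c p = aeval (fun i => if i = z then X z + C c else X i) p := rfl

theorem Tshift_mul (p q : MvPolynomial (Fin n) ℂ) :
    Tshift z c (p * q) = Tshift z c p * Tshift z c q := by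
  simp only [Tshift_apply, map_mul]

theorem Tshift_C (a : ℂ) : Tshift z c (C a) = C a := by
  simp [Tshift_apply]

theorem Tshift_X_self : Tshift z c (X z) = X z + C c := by
  simp [Tshift_apply]

variable {z} in
theorem Tshift_X_of_ne {j : Fin n} (hj : j ≠ z) : Tshift z c (X j) = X j := by
  simp [Tshift_apply, hj]

theorem pderiv_Tshift (k : Fin n) (p : MvPolynomial (Fin n) ℂ) :
    pderiv k (Tshift z c p) = Tshift z c (pderiv k p) := by
  have hX (i : Fin n) : pderiv k (Tshift z c (X i)) = Tshift z c (pderiv k (X i)) := by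
    have hXi : Tshift z c (X i) = X i + C (if i = z then c else 0) := by
      by_cases hi : i = z
      · subst hi; simp [Tshift_X_self]
      · simp [Tshift_X_of_ne c hi, hi]
    by_cases hik : i = k
    · subst hik; simp [hXi, Tshift_apply]
    · rw [hXi, map_add, pderiv_C, add_zero, pderiv_X_of_ne hik, map_zero]
  induction p using MvPolynomial.induction_on with
  | C a => simp [Tshift_C]
  | add p q hp hq => simp only [map_add, hp, hq]
  | mul_X p i hp => simp only [Tshift_mul, pderiv_mul, hp, hX, map_add]

theorem Tshift_eulerOp_compl (p : MvPolynomial (Fin n) ℂ) :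
    Tshift z c (eulerOp {z}ᶜ p) = eulerOp {z}ᶜ (Tshift z c p) := by
  simp only [eulerOp_apply, map_sum, Tshift_mul, pderiv_Tshift]
  refine Finset.sum_congr rfl fun k hk => ?_
  rw [Tshift_X_of_ne c (by simpa using hk)]

end Shift

theorem abXhatTime_eq {n : ℕ} (z : Fin n) (h s : ℂ) :
    abXhatTime z h s = Mop z + (Complex.I * h * s) • eulerOp {z}ᶜ := by
  simp only [abXhatTime, eulerOp, Mop, Pop, LinearMap.comp_smul, ← Finset.smul_sum, smul_smul,
    sub_eq_add_neg, ← neg_smul]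
  congr 2
  ring

theorem abXhatTime_apply {n : ℕ} (z : Fin n) (h s : ℂ) (p : MvPolynomial (Fin n) ℂ) :
    abXhatTime z h s p = X z * p + C (Complex.I * h * s) * eulerOp {z}ᶜ p := by
  simp only [abXhatTime_eq, LinearMap.add_apply, LinearMap.smul_apply, smul_eq_C_mul]
  rfl

theorem abXhatSpace_apply {n : ℕ} (z : Fin n) (h s : ℂ) (j : Fin n) (p : MvPolynomial (Fin n) ℂ) :
    abXhatSpace z h s j p = X j * Tshift z (-Complex.I * (1 - s) * h) p := rfl

theorem abelian_twist_kappaMinkowski_general (n : ℕ) (h s : ℂ)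
    (z : Fin n) :
    (∀ j : Fin n, j ≠ z →
      abXhatTime z h s ∘ₗ abXhatSpace z h s j - abXhatSpace z h s j ∘ₗ abXhatTime z h s =
        (Complex.I * h) • abXhatSpace z h s j) ∧
    (∀ j k : Fin n, j ≠ z → k ≠ z →
      abXhatSpace z h s j ∘ₗ abXhatSpace z h s k -
        abXhatSpace z h s k ∘ₗ abXhatSpace z h s j = 0) := by
  refine ⟨fun j hj => LinearMap.ext fun p => ?_, fun j k hj hk => LinearMap.ext fun p => ?_⟩
  · have hj' : j ∈ ({z}ᶜ : Finset (Fin n)) := by simpa using hj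
    simp only [LinearMap.sub_apply, LinearMap.comp_apply, LinearMap.smul_apply, abXhatTime_apply,
      abXhatSpace_apply, eulerOp_X_mul hj', Tshift_mul, map_add, Tshift_X_self, Tshift_C,
      Tshift_eulerOp_compl, smul_eq_C_mul]
    simp only [map_mul, map_sub, map_neg, map_one]
    ring
  · simp only [LinearMap.sub_apply, LinearMap.comp_apply, LinearMap.zero_apply, abXhatSpace_apply,
      Tshift_mul, Tshift_X_of_ne _ hj, Tshift_X_of_ne _ hk]
    ring

/-- For `n ≥ 2` and parameters `h, s ∈ ℂ`, the operators
`X̂⁰ = M₀ − h·s·Σ_k M_k∘P_k` and `X̂ʲ = M_j ∘ T_{−i(1−s)h}` on `ℂ[x⁰, …, x^{n-1}]`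
satisfy the κ-Minkowski commutation relations `[X̂⁰, X̂ʲ] = i·h·X̂ʲ`, `[X̂ʲ, X̂ᵏ] = 0`. -/
theorem abelian_twist_kappaMinkowski (n : ℕ) (hn : 2 ≤ n) (h s : ℂ)
    (z : Fin n) (hz : (z : ℕ) = 0) :
    (∀ j : Fin n, j ≠ z →
      abXhatTime z h s ∘ₗ abXhatSpace z h s j - abXhatSpace z h s j ∘ₗ abXhatTime z h s =
        (Complex.I * h) • abXhatSpace z h s j) ∧
    (∀ j k : Fin n, j ≠ z → k ≠ z →
      abXhatSpace z h s j ∘ₗ abXhatSpace z h s k -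
        abXhatSpace z h s k ∘ₗ abXhatSpace z h s j = 0) :=
  abelian_twist_kappaMinkowski_general n h s z
end

section
/- Fix n ≥ 2 and complex parameters h, s, and let X̂⁰ := M₀ − h·s·Σ_{k=1}^{n-1} M_k ∘ P_k and X̂ʲ := M_j ∘ T_c with c := −i(1−s)h be the Abelian-twist realization of κ-Minkowski coordinates on A = ℂ[x⁰, …, x^{n-1}]. Then together with the momenta P_μ = −i∂_μ they close the s-deformed phase space relations: [X̂⁰, P₀] = i·id, [X̂ʲ, P₀] = 0, [X̂ʲ, P_k] = i·δʲ_k·T_c (i.e. i·δʲ_k·e^{(1−s)hP₀}), and [X̂⁰, P_k] = −i·h·s·P_k, for all j, k ∈ {1, …, n−1}. -/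
open MvPolynomial

/-! Every relation reduces to three facts about operators on polynomials: the canonical
commutator `[M_μ, P_ν] = i δ_μν`, the commutation of partial derivatives with each other, and
their commutation with translations `T_c`. Since `X̂ʲ = M_j T_c` and the summands `M_k P_k` of
`X̂⁰` are of the form `a * t` with `t` commuting with every `P_μ`, their brackets with `P_μ` are
`[a, P_μ] * t`. -/

theorem MvPolynomial.pderiv_pderiv_comm {σ R : Type*} [CommSemiring R] (i j : σ)
    (p : MvPolynomial σ R) : pderiv i (pderiv j p) = pderiv j (pderiv i p) := by
  classical
  induction p using MvPolynomial.induction_on with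
  | C a => simp
  | add p q hp hq => simp [hp, hq]
  | mul_X p k hp =>
    simp only [pderiv_mul, pderiv_X, map_add, hp, Pi.single_apply]
    split_ifs <;> subst_vars <;> simp

theorem MvPolynomial.pderiv_aeval_X_add_C {σ R : Type*} [CommSemiring R] (c : σ → R) (i : σ)
    (p : MvPolynomial σ R) :
    pderiv i (aeval (fun j => X j + C (c j)) p) = aeval (fun j => X j + C (c j)) (pderiv i p) := by
  classical
  induction p using MvPolynomial.induction_on with
  | C a => simp
  | add p q hp hq => simp only [map_add, hp, hq]
  | mul_X p k hp =>
    simp only [map_mul, aeval_X, pderiv_mul, map_add, hp, pderiv_C, add_zero, pderiv_X,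
      Pi.single_apply]
    split_ifs <;> simp

theorem Tshift_eq_aeval {n : ℕ} (z : Fin n) (c : ℂ) :
    Tshift z c = (aeval fun i => X i + C (Pi.single z c i)).toLinearMap := by
  unfold Tshift
  congr
  ext i : 1
  split_ifs with hi <;> simp [hi]

theorem Ring.lie_mul_of_commute {A : Type*} [Ring A] {a b c : A} (h : Commute b c) :
    ⁅a * b, c⁆ = ⁅a, c⁆ * b := by
  rw [Ring.lie_def, Ring.lie_def, sub_mul, mul_assoc a b c, h.eq]
  simp only [mul_assoc]

section Operators

variable {n : ℕ}

theorem commute_Pop_Pop (μ ν : Fin n) : Commute (Pop μ) (Pop ν) := by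
  refine (Commute.smul_left ?_ _).smul_right _
  exact LinearMap.ext fun p => pderiv_pderiv_comm μ ν p

theorem commute_Tshift_Pop (z ν : Fin n) (c : ℂ) : Commute (Tshift z c) (Pop ν) := by
  rw [Tshift_eq_aeval]
  exact Commute.smul_right (LinearMap.ext fun p => (pderiv_aeval_X_add_C _ ν p).symm) _

theorem lie_Mop_Pop (μ ν : Fin n) : ⁅Mop μ, Pop ν⁆ = if μ = ν then Complex.I • 1 else 0 := by
  refine LinearMap.ext fun p => ?_
  simp only [Ring.lie_def, LinearMap.sub_apply, Module.End.mul_apply, Mop, Pop,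
    LinearMap.mulLeft_apply, LinearMap.smul_apply, Derivation.coeFn_coe, pderiv_mul, pderiv_X]
  split_ifs with h <;> simp [smul_eq_C_mul, h] <;> ring

theorem lie_Mop_mul_Pop_Pop (k μ : Fin n) :
    ⁅Mop k * Pop k, Pop μ⁆ = if k = μ then Complex.I • Pop k else 0 := by
  rw [Ring.lie_mul_of_commute (commute_Pop_Pop k μ), lie_Mop_Pop]
  split_ifs <;> simp

theorem lie_abXhatTime_Pop (z μ : Fin n) (h s : ℂ) :
    ⁅abXhatTime z h s, Pop μ⁆ =
      ⁅Mop z, Pop μ⁆ - (h * s) • ∑ k ∈ ({z}ᶜ : Finset (Fin n)), ⁅Mop k * Pop k, Pop μ⁆ := by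
  simp only [abXhatTime, Ring.lie_def, ← Module.End.mul_eq_comp, sub_mul, mul_sub, smul_mul_assoc,
    mul_smul_comm, Finset.sum_mul, Finset.mul_sum, smul_sub, Finset.sum_sub_distrib]
  abel

theorem lie_abXhatTime_Pop_self (z : Fin n) (h s : ℂ) :
    ⁅abXhatTime z h s, Pop z⁆ = Complex.I • 1 := by
  rw [lie_abXhatTime_Pop, lie_Mop_Pop, if_pos rfl, Finset.sum_eq_zero, smul_zero, sub_zero]
  intro k hk
  rw [lie_Mop_mul_Pop_Pop, if_neg (by simpa using hk)]

theorem lie_abXhatTime_Pop_of_ne {z k : Fin n} (hk : k ≠ z) (h s : ℂ) :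
    ⁅abXhatTime z h s, Pop k⁆ = (-Complex.I * h * s) • Pop k := by
  simp only [lie_abXhatTime_Pop, lie_Mop_Pop, if_neg hk.symm, lie_Mop_mul_Pop_Pop,
    Finset.sum_ite_eq', Finset.mem_compl, Finset.mem_singleton, if_pos hk, zero_sub, smul_smul,
    ← neg_smul]
  congr 1
  ring

theorem lie_abXhatSpace_Pop (z j μ : Fin n) (h s : ℂ) :
    ⁅abXhatSpace z h s j, Pop μ⁆ =
      if j = μ then Complex.I • Tshift z (-Complex.I * (1 - s) * h) else 0 := by
  rw [abXhatSpace, ← Module.End.mul_eq_comp, Ring.lie_mul_of_commute (commute_Tshift_Pop ..),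
    lie_Mop_Pop]
  split_ifs <;> simp

end Operators

theorem abelian_twist_deformed_phase_space_general (n : ℕ) (h s : ℂ)
    (z : Fin n) :
    (abXhatTime z h s ∘ₗ Pop z - Pop z ∘ₗ abXhatTime z h s =
      Complex.I • (LinearMap.id : Module.End ℂ (MvPolynomial (Fin n) ℂ))) ∧
    (∀ j : Fin n, j ≠ z →
      abXhatSpace z h s j ∘ₗ Pop z - Pop z ∘ₗ abXhatSpace z h s j = 0) ∧
    (∀ j k : Fin n, j ≠ z → k ≠ z →
      abXhatSpace z h s j ∘ₗ Pop k - Pop k ∘ₗ abXhatSpace z h s j =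
        if j = k then Complex.I • Tshift z (-Complex.I * (1 - s) * h) else 0) ∧
    (∀ k : Fin n, k ≠ z →
      abXhatTime z h s ∘ₗ Pop k - Pop k ∘ₗ abXhatTime z h s =
        (-Complex.I * h * s) • Pop k) :=
  -- in `Module.End`, `f ∘ₗ g - g ∘ₗ f` is `⁅f, g⁆` by definition
  ⟨lie_abXhatTime_Pop_self z h s,
    fun j hj => (lie_abXhatSpace_Pop z j z h s).trans (if_neg hj),
    fun j k _ _ => lie_abXhatSpace_Pop z j k h s,
    fun _ hk => lie_abXhatTime_Pop_of_ne hk h s⟩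

/-- For `n ≥ 2` and parameters `h, s ∈ ℂ`, the Abelian-twist κ-Minkowski
coordinates `X̂⁰, X̂ʲ` together with the momenta `P_μ = −i∂_μ` close the `s`-deformed phase
space relations: `[X̂⁰, P₀] = i·id`, `[X̂ʲ, P₀] = 0`,
`[X̂ʲ, P_k] = i·δʲ_k·e^{(1−s)hP₀}` and `[X̂⁰, P_k] = −i·h·s·P_k`. -/
theorem abelian_twist_deformed_phase_space (n : ℕ) (hn : 2 ≤ n) (h s : ℂ)
    (z : Fin n) (hz : (z : ℕ) = 0) :
    (abXhatTime z h s ∘ₗ Pop z - Pop z ∘ₗ abXhatTime z h s =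
      Complex.I • (LinearMap.id : Module.End ℂ (MvPolynomial (Fin n) ℂ))) ∧
    (∀ j : Fin n, j ≠ z →
      abXhatSpace z h s j ∘ₗ Pop z - Pop z ∘ₗ abXhatSpace z h s j = 0) ∧
    (∀ j k : Fin n, j ≠ z → k ≠ z →
      abXhatSpace z h s j ∘ₗ Pop k - Pop k ∘ₗ abXhatSpace z h s j =
        if j = k then Complex.I • Tshift z (-Complex.I * (1 - s) * h) else 0) ∧
    (∀ k : Fin n, k ≠ z →
      abXhatTime z h s ∘ₗ Pop k - Pop k ∘ₗ abXhatTime z h s =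
        (-Complex.I * h * s) • Pop k) :=
  abelian_twist_deformed_phase_space_general n h s z
end

section
/- Fix n ≥ 2, a complex parameter h, and r ∈ ℂ with r ≠ 0. On the polynomial algebra A = ℂ[x⁰, …, x^{n-1}] define X̂⁰ := M₀ ∘ (id + i·h·r·∂₀) (realizing x⁰(1 − hrP₀)) and X̂ⁱ := M_i ∘ g_r for i = 1, …, n−1, where g_r := Σ_{m≥0} binom(−1/r, m)·(i h r)^m·∂₀^m is the binomial-series operator realizing (1 − hrP₀)^{−1/r} (a well-defined ℂ-linear endomorphism of A, since ∂₀ is locally nilpotent on polynomials so the sum is finite on each polynomial). Then the κ-Minkowski relations hold: [X̂⁰, X̂ⁱ] = i·h·X̂ⁱ and [X̂ⁱ, X̂ʲ] = 0 for all i, j ∈ {1, …, n−1}. (This is the Heisenberg realization of κ-Minkowski spacetime arising from the Jordanian family of twists.) -/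
/-!
Write `D = ∂₀`, `c = i·h·r`, `α = -1/r` and `S_α = Σ_m binom(α, m) cᵐ Dᵐ`, so that `g = S_α` on
every polynomial (the sum is finite there, since `D` lowers the total degree). Formally
`S_α = (1 + cD)^α`, and the two identities behind the theorem are the truncated versions of
`(1 + cD)^(α-1) (1 + cD) = (1 + cD)^α` (Pascal's rule) and of `[(1 + cD)^α, x⁰] = αc (1 + cD)^(α-1)`
(from `[D, x⁰] = 1`). Together they give `g ∘ x⁰(1 + cD) = x⁰(1 + cD) ∘ g + αc · g` with
`αc = -i·h`. The spatial variables commute with `x⁰`, `D` and hence `g`, which yields both relations.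
-/

open MvPolynomial

/-- The generalized binomial coefficient `binom(α, m) = α(α−1)⋯(α−m+1)/m!`. -/
noncomputable def genBinom (α : ℂ) (m : ℕ) : ℂ :=
  (∏ i ∈ Finset.range m, (α - (i : ℂ))) / (Nat.factorial m : ℂ)

open Finset

namespace MvPolynomial

variable {σ R : Type*} [CommSemiring R]

theorem totalDegree_pderiv_le (i : σ) (f : MvPolynomial σ R) :
    (pderiv i f).totalDegree ≤ f.totalDegree - 1 := by
  conv_lhs => rw [f.as_sum, map_sum]
  refine totalDegree_finsetSum_le fun s hs => ?_
  rw [pderiv_monomial]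
  by_cases hsi : s i = 0
  · simp [hsi]
  have hle : Finsupp.single i 1 ≤ s :=
    Finsupp.single_le_iff.mpr (Nat.one_le_iff_ne_zero.mpr hsi)
  have hdeg := congrArg Finsupp.degree (tsub_add_cancel_of_le hle)
  rw [map_add, Finsupp.degree_single] at hdeg
  have hs_le : s.degree ≤ f.totalDegree := le_totalDegree hs
  refine (totalDegree_monomial_le _ _).trans ?_
  change Finsupp.degree _ ≤ _
  omega

theorem pderiv_pow_apply_eq_zero_of_totalDegree_lt (i : σ) {m : ℕ} {f : MvPolynomial σ R}
    (hf : f.totalDegree < m) : ((pderiv i).toLinearMap ^ m) f = 0 := by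
  induction m generalizing f with
  | zero => omega
  | succ m ih =>
    rw [pow_succ, Module.End.mul_apply]
    rcases Nat.eq_zero_or_pos f.totalDegree with h0 | hpos
    · rw [totalDegree_eq_zero_iff_eq_C.mp h0]
      simp
    · exact ih ((totalDegree_pderiv_le i f).trans_lt (by omega))

theorem totalDegree_X_mul_le [Nontrivial R] (i : σ) (p : MvPolynomial σ R) :
    (X i * p).totalDegree ≤ p.totalDegree + 1 :=
  (totalDegree_mul _ _).trans (by rw [totalDegree_X, add_comm])

theorem totalDegree_add_smul_pderiv_le (i : σ) (c : R) (p : MvPolynomial σ R) :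
    (p + c • pderiv i p).totalDegree ≤ p.totalDegree :=
  (totalDegree_add _ _).trans <| max_le le_rfl <|
    (totalDegree_smul_le _ _).trans <| (totalDegree_pderiv_le i p).trans (Nat.sub_le _ _)

theorem pderiv_mul_mulLeft_X_self (i : σ) :
    (pderiv i).toLinearMap * LinearMap.mulLeft R (X i) =
      LinearMap.mulLeft R (X i) * (pderiv i).toLinearMap + 1 := by
  ext p
  simp [add_comm]

theorem commute_mulLeft_X_pderiv {i j : σ} (hji : j ≠ i) :
    Commute (LinearMap.mulLeft R (X j)) (pderiv i).toLinearMap := by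
  ext p
  simp [pderiv_X_of_ne hji]

theorem commute_mulLeft_X (i j : σ) :
    Commute (LinearMap.mulLeft R (X i : MvPolynomial σ R)) (LinearMap.mulLeft R (X j)) := by
  simp only [Commute, SemiconjBy, Module.End.mul_eq_comp, ← LinearMap.mulLeft_mul, mul_comm]

end MvPolynomial

theorem prod_range_succ_sub_natCast {K : Type*} [CommRing K] (α : K) (m : ℕ) :
    ∏ i ∈ range (m + 1), (α - i) = α * ∏ i ∈ range m, (α - 1 - i) := by
  rw [prod_range_succ', mul_comm]
  push_cast
  simp_rw [sub_add_eq_sub_sub_swap, sub_zero]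

@[simp]
theorem genBinom_zero (α : ℂ) : genBinom α 0 = 1 := by simp [genBinom]

theorem genBinom_succ (α : ℂ) (m : ℕ) :
    genBinom α (m + 1) = genBinom (α - 1) (m + 1) + genBinom (α - 1) m := by
  have hm : (m : ℂ) + 1 ≠ 0 := Nat.cast_add_one_ne_zero m
  simp only [genBinom, prod_range_succ_sub_natCast α, prod_range_succ _ m, Nat.factorial_succ]
  push_cast
  field_simp
  ring

theorem succ_mul_genBinom_succ (α : ℂ) (m : ℕ) :
    (m + 1) * genBinom α (m + 1) = α * genBinom (α - 1) m := by
  have hm : (m : ℂ) + 1 ≠ 0 := Nat.cast_add_one_ne_zero m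
  simp only [genBinom, prod_range_succ_sub_natCast α, Nat.factorial_succ]
  push_cast
  field_simp

theorem pow_succ_mul_of_mul_eq_mul_add_one {S : Type*} [Ring S] {D M : S}
    (hDM : D * M = M * D + 1) (m : ℕ) :
    D ^ (m + 1) * M = M * D ^ (m + 1) + (m + 1) • D ^ m := by
  induction m with
  | zero => simpa using hDM
  | succ m ih =>
    rw [pow_succ', mul_assoc, ih, mul_add, ← mul_assoc, hDM]
    simp only [add_mul, one_mul, mul_assoc, ← pow_succ', mul_smul_comm, succ_nsmul _ (m + 1)]
    abel

section BinomPartialSum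

variable {R : Type*} [Ring R] [Algebra ℂ R]

noncomputable def binomPartialSum (α c : ℂ) (D : R) (N : ℕ) : R :=
  ∑ m ∈ range N, (genBinom α m * c ^ m) • D ^ m

theorem binomPartialSum_succ (α c : ℂ) (D : R) (N : ℕ) :
    binomPartialSum α c D (N + 1) =
      binomPartialSum α c D N + (genBinom α N * c ^ N) • D ^ N :=
  sum_range_succ _ _

theorem Commute.binomPartialSum_right {M D : R} (h : Commute M D) (α c : ℂ) (N : ℕ) :
    Commute M (binomPartialSum α c D N) :=
  Commute.sum_right _ _ _ fun m _ => (h.pow_right m).smul_right _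

theorem binomPartialSum_sub_one_mul_one_add_smul (α c : ℂ) (D : R) (N : ℕ) :
    binomPartialSum (α - 1) c D (N + 1) * (1 + c • D) =
      binomPartialSum α c D (N + 1) + (genBinom (α - 1) N * c ^ (N + 1)) • D ^ (N + 1) := by
  induction N with
  | zero => simp [binomPartialSum, mul_add]
  | succ N ih =>
    rw [binomPartialSum_succ (α - 1) c D (N + 1), add_mul, ih, binomPartialSum_succ α c D (N + 1),
      genBinom_succ α N, mul_add, mul_one, smul_mul_smul_comm, ← pow_succ]
    module

theorem binomPartialSum_succ_mul_of_mul_eq_mul_add_one {D M : R} (hDM : D * M = M * D + 1)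
    (α c : ℂ) (N : ℕ) :
    binomPartialSum α c D (N + 1) * M =
      M * binomPartialSum α c D (N + 1) + (α * c) • binomPartialSum (α - 1) c D N := by
  induction N with
  | zero => simp [binomPartialSum]
  | succ N ih =>
    have hcoeff : genBinom α (N + 1) * c ^ (N + 1) * (N + 1 : ℕ) =
        α * c * (genBinom (α - 1) N * c ^ N) := by
      push_cast
      linear_combination c ^ (N + 1) * succ_mul_genBinom_succ α N
    rw [binomPartialSum_succ, add_mul, ih, smul_mul_assoc, pow_succ_mul_of_mul_eq_mul_add_one hDM,
      binomPartialSum_succ (α - 1), ← Nat.cast_smul_eq_nsmul ℂ, mul_add, mul_smul_comm]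
    linear_combination (norm := module) hcoeff • D ^ N

end BinomPartialSum

namespace MvPolynomial

def IsPderivBinomSeries {σ : Type*} (α c : ℂ) (i : σ) (g : Module.End ℂ (MvPolynomial σ ℂ)) :
    Prop :=
  ∀ f N, f.totalDegree < N → g f = binomPartialSum α c (pderiv i).toLinearMap N f

namespace IsPderivBinomSeries

variable {σ : Type*} {i : σ} {α c : ℂ} {g : Module.End ℂ (MvPolynomial σ ℂ)}

theorem commute_mulLeft_X (hg : IsPderivBinomSeries α c i g) {j : σ} (hji : j ≠ i) :
    Commute g (LinearMap.mulLeft ℂ (X j)) := by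
  refine LinearMap.ext fun f => ?_
  have hN : (X j * f).totalDegree < f.totalDegree + 2 :=
    (totalDegree_X_mul_le j f).trans_lt (Nat.lt_succ_self _)
  simp only [Module.End.mul_apply, LinearMap.mulLeft_apply]
  rw [hg _ _ hN, hg f (f.totalDegree + 2) (by omega)]
  exact LinearMap.congr_fun ((commute_mulLeft_X_pderiv hji).binomPartialSum_right α c _).eq.symm f

theorem mul_mulLeft_X_mul_one_add_smul_pderiv (hg : IsPderivBinomSeries α c i g) :
    g * (LinearMap.mulLeft ℂ (X i) * (1 + c • (pderiv i).toLinearMap)) =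
      LinearMap.mulLeft ℂ (X i) * (1 + c • (pderiv i).toLinearMap) * g + (α * c) • g := by
  set D : Module.End ℂ (MvPolynomial σ ℂ) := (pderiv i).toLinearMap
  set T : Module.End ℂ (MvPolynomial σ ℂ) := 1 + c • D
  refine LinearMap.ext fun f => ?_
  set k := f.totalDegree
  have hTf : T f = f + c • pderiv i f := rfl
  have hdeg : (X i * T f).totalDegree < k + 2 :=
    (totalDegree_X_mul_le i _).trans_lt (by grw [hTf, totalDegree_add_smul_pderiv_le]; omega)
  have hST : (binomPartialSum α c D (k + 2) * T) f = T (g f) := by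
    have hTD : Commute T D := (Commute.one_left D).add_left ((Commute.refl D).smul_left c)
    rw [← (hTD.binomPartialSum_right α c _).eq, Module.End.mul_apply, ← hg f (k + 2) (by omega)]
  have hS'T : (binomPartialSum (α - 1) c D (k + 1) * T) f = g f := by
    rw [binomPartialSum_sub_one_mul_one_add_smul, LinearMap.add_apply, LinearMap.smul_apply,
      pderiv_pow_apply_eq_zero_of_totalDegree_lt i (Nat.lt_succ_self k), smul_zero, add_zero,
      hg f (k + 1) (by omega)]
  calc g (X i * T f)
      = (binomPartialSum α c D (k + 2) * LinearMap.mulLeft ℂ (X i) * T :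
          Module.End ℂ (MvPolynomial σ ℂ)) f := hg _ _ hdeg
    _ = (LinearMap.mulLeft ℂ (X i) * (binomPartialSum α c D (k + 2) * T) +
          (α * c) • (binomPartialSum (α - 1) c D (k + 1) * T) :
          Module.End ℂ (MvPolynomial σ ℂ)) f := by
        rw [binomPartialSum_succ_mul_of_mul_eq_mul_add_one (pderiv_mul_mulLeft_X_self i),
          add_mul, smul_mul_assoc, mul_assoc]
    _ = X i * T (g f) + (α * c) • g f := by
        rw [LinearMap.add_apply, LinearMap.smul_apply, Module.End.mul_apply, hST, hS'T]
        rfl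

end IsPderivBinomSeries

end MvPolynomial

theorem jordanian_twist_kappaMinkowski_general (n : ℕ) (h r : ℂ) (hr : r ≠ 0)
    (z : Fin n)
    (g : Module.End ℂ (MvPolynomial (Fin n) ℂ))
    (hg : ∀ (f : MvPolynomial (Fin n) ℂ) (N : ℕ), f.totalDegree < N →
      g f = ∑ m ∈ Finset.range N,
        (genBinom (-1 / r) m * (Complex.I * h * r) ^ m) •
          (((MvPolynomial.pderiv z).toLinearMap ^ m) f)) :
    (∀ i : Fin n, i ≠ z →
      (Mop z ∘ₗ (LinearMap.id + (Complex.I * h * r) • (MvPolynomial.pderiv z).toLinearMap))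
          ∘ₗ (Mop i ∘ₗ g) -
        (Mop i ∘ₗ g) ∘ₗ
          (Mop z ∘ₗ (LinearMap.id + (Complex.I * h * r) • (MvPolynomial.pderiv z).toLinearMap))
        = (Complex.I * h) • (Mop i ∘ₗ g)) ∧
    (∀ i j : Fin n, i ≠ z → j ≠ z →
      (Mop i ∘ₗ g) ∘ₗ (Mop j ∘ₗ g) - (Mop j ∘ₗ g) ∘ₗ (Mop i ∘ₗ g) = 0) := by
  have hg' : IsPderivBinomSeries (-1 / r) (Complex.I * h * r) z g := fun f N hN => by
    simp [hg f N hN, binomPartialSum]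
  have hαc : -1 / r * (Complex.I * h * r) = -(Complex.I * h) := by field_simp
  simp only [← Module.End.mul_eq_comp, ← Module.End.one_eq_id, Mop]
  refine ⟨fun i hi => ?_, fun i j hi hj => ?_⟩
  · have hcomm : Commute (LinearMap.mulLeft ℂ (X i))
        (LinearMap.mulLeft ℂ (X z) * (1 + (Complex.I * h * r) • (pderiv z).toLinearMap)) :=
      (commute_mulLeft_X i z).mul_right
        ((Commute.one_right _).add_right ((commute_mulLeft_X_pderiv hi).smul_right _))
    rw [← mul_assoc, ← hcomm.eq, mul_assoc, mul_assoc (LinearMap.mulLeft ℂ (X i)),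
      hg'.mul_mulLeft_X_mul_one_add_smul_pderiv, hαc, ← mul_sub, sub_add_cancel_left]
    exact LinearMap.ext fun f => by simp
  · have hgi := hg'.commute_mulLeft_X hi
    have hgj := hg'.commute_mulLeft_X hj
    exact sub_eq_zero.mpr <| Commute.eq <|
      ((commute_mulLeft_X i j).mul_left hgj).mul_right (hgi.symm.mul_left (Commute.refl g))

/-- Fix `n ≥ 2`, `h ∈ ℂ` and `r ∈ ℂ`, `r ≠ 0`. Let
`X̂⁰ = M₀ ∘ (id + i·h·r·∂₀)` (realizing `x⁰(1 − hrP₀)`) and `X̂ⁱ = M_i ∘ g_r`, where `g_r`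
is the binomial series operator `Σ_m binom(−1/r, m)·(ihr)^m·∂₀^m` realizing
`(1 − hrP₀)^{−1/r}` (well defined since `∂₀` is locally nilpotent on polynomials:
on each polynomial `f` the series equals any partial sum past `totalDegree f`).
Then the κ-Minkowski relations hold: `[X̂⁰, X̂ⁱ] = i·h·X̂ⁱ` and `[X̂ⁱ, X̂ʲ] = 0`. -/
theorem jordanian_twist_kappaMinkowski (n : ℕ) (hn : 2 ≤ n) (h r : ℂ) (hr : r ≠ 0)
    (z : Fin n) (hz : (z : ℕ) = 0)
    (g : Module.End ℂ (MvPolynomial (Fin n) ℂ))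
    (hg : ∀ (f : MvPolynomial (Fin n) ℂ) (N : ℕ), f.totalDegree < N →
      g f = ∑ m ∈ Finset.range N,
        (genBinom (-1 / r) m * (Complex.I * h * r) ^ m) •
          (((MvPolynomial.pderiv z).toLinearMap ^ m) f)) :
    (∀ i : Fin n, i ≠ z →
      (Mop z ∘ₗ (LinearMap.id + (Complex.I * h * r) • (MvPolynomial.pderiv z).toLinearMap))
          ∘ₗ (Mop i ∘ₗ g) -
        (Mop i ∘ₗ g) ∘ₗ
          (Mop z ∘ₗ (LinearMap.id + (Complex.I * h * r) • (MvPolynomial.pderiv z).toLinearMap))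
        = (Complex.I * h) • (Mop i ∘ₗ g)) ∧
    (∀ i j : Fin n, i ≠ z → j ≠ z →
      (Mop i ∘ₗ g) ∘ₗ (Mop j ∘ₗ g) - (Mop j ∘ₗ g) ∘ₗ (Mop i ∘ₗ g) = 0) :=
  jordanian_twist_kappaMinkowski_general n h r hr z g hg
end

section
/- Fix n ≥ 2, a complex parameter h, and r ∈ ℂ with r ≠ 0, and let X̂⁰ := M₀ ∘ (id + i·h·r·∂₀) and X̂ⁱ := M_i ∘ g_r (with g_r := Σ_{m≥0} binom(−1/r, m)·(i h r)^m·∂₀^m) be the Jordanian realization of κ-Minkowski coordinates on A = ℂ[x⁰, …, x^{n-1}]. Then together with the momenta P_μ = −i∂_μ they close the r-deformed phase space relations: [X̂⁰, P₀] = i·(id + i·h·r·∂₀) (i.e. i(1 − hrP₀)), [X̂⁰, P_k] = 0, [X̂ⁱ, P₀] = 0, and [X̂ⁱ, P_k] = i·δⁱ_k·g_r (i.e. i·δⁱ_k·(1 − hrP₀)^{−1/r}), for all i, k ∈ {1, …, n−1}. -/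
open MvPolynomial

/-! Each realized coordinate has the form `M_i ∘ b`, where `b` is (on every polynomial, a finite)
power series in `∂₀`. Since partial derivatives commute, `b` commutes with every momentum, so
`[M_i ∘ b, P_k] = [M_i, P_k] ∘ b = i·δ_ik·b`; with `b = id + i·h·r·∂₀` and `b = g_r` this gives all
four relations. -/

namespace MvPolynomial

variable {σ R : Type*} [DecidableEq σ] [CommRing R]

theorem commute_pderiv (i j : σ) :
    Commute (pderiv (R := R) i).toLinearMap (pderiv j).toLinearMap := by
  have : ⁅pderiv i, pderiv j⁆ = (0 : Derivation R (MvPolynomial σ R) (MvPolynomial σ R)) :=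
    derivation_ext fun k => by
      rw [Derivation.commutator_apply, pderiv_X, pderiv_X]
      simp [Pi.single_apply, apply_ite]
  rw [commute_iff_lie_eq, ← Derivation.commutator_coe_linear_map, this]
  rfl

theorem commute_pderiv_of_eq_sum_pow (z k : σ) (c : ℕ → R) (g : Module.End R (MvPolynomial σ R))
    (hg : ∀ (f : MvPolynomial σ R) (N : ℕ), f.totalDegree < N →
      g f = ∑ m ∈ Finset.range N, c m • (((pderiv z).toLinearMap ^ m) f)) :
    Commute g (pderiv k).toLinearMap := by
  refine LinearMap.ext fun f => ?_
  show g (pderiv k f) = pderiv k (g f)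
  set N := max f.totalDegree (pderiv k f).totalDegree + 1
  rw [hg _ N (by omega), hg _ N (by omega), map_sum]
  refine Finset.sum_congr rfl fun m _ => ?_
  rw [Derivation.map_smul]
  exact congrArg (c m • ·) (LinearMap.congr_fun ((commute_pderiv z k).pow_left m).eq f)

end MvPolynomial

theorem mul_mul_sub_mul_mul_of_commute {A : Type*} [Ring A] {a b p : A} (h : Commute b p) :
    a * b * p - p * (a * b) = (a * p - p * a) * b := by
  rw [mul_assoc, h.eq, sub_mul, mul_assoc, mul_assoc]

theorem Mop_mul_Pop_sub {n : ℕ} (i k : Fin n) :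
    Mop i * Pop k - Pop k * Mop i = if i = k then Complex.I • 1 else 0 := by
  refine LinearMap.ext fun f => ?_
  split_ifs with hik
  · subst hik
    simp [Mop, Pop, Derivation.leibniz]
  · simp [Mop, Pop, Derivation.leibniz, pderiv_X_of_ne hik]

theorem Mop_mul_mul_Pop_sub_of_commute {n : ℕ} {i k : Fin n}
    {b : Module.End ℂ (MvPolynomial (Fin n) ℂ)} (hb : Commute b (Pop k)) :
    Mop i * b * Pop k - Pop k * (Mop i * b) = if i = k then Complex.I • b else 0 := by
  rw [mul_mul_sub_mul_mul_of_commute hb, Mop_mul_Pop_sub]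
  split_ifs <;> simp

theorem jordanian_twist_deformed_phase_space_general (n : ℕ) (h r : ℂ)
    (z : Fin n)
    (g : Module.End ℂ (MvPolynomial (Fin n) ℂ))
    (hg : ∀ (f : MvPolynomial (Fin n) ℂ) (N : ℕ), f.totalDegree < N →
      g f = ∑ m ∈ Finset.range N,
        (genBinom (-1 / r) m * (Complex.I * h * r) ^ m) •
          (((MvPolynomial.pderiv z).toLinearMap ^ m) f)) :
    ((Mop z ∘ₗ (LinearMap.id + (Complex.I * h * r) • (MvPolynomial.pderiv z).toLinearMap))
        ∘ₗ Pop z -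
      Pop z ∘ₗ
        (Mop z ∘ₗ (LinearMap.id + (Complex.I * h * r) • (MvPolynomial.pderiv z).toLinearMap))
      = Complex.I •
          (LinearMap.id + (Complex.I * h * r) • (MvPolynomial.pderiv z).toLinearMap)) ∧
    (∀ k : Fin n, k ≠ z →
      (Mop z ∘ₗ (LinearMap.id + (Complex.I * h * r) • (MvPolynomial.pderiv z).toLinearMap))
          ∘ₗ Pop k -
        Pop k ∘ₗ
          (Mop z ∘ₗ (LinearMap.id + (Complex.I * h * r) • (MvPolynomial.pderiv z).toLinearMap))
        = 0) ∧
    (∀ i : Fin n, i ≠ z → (Mop i ∘ₗ g) ∘ₗ Pop z - Pop z ∘ₗ (Mop i ∘ₗ g) = 0) ∧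
    (∀ i k : Fin n, i ≠ z → k ≠ z →
      (Mop i ∘ₗ g) ∘ₗ Pop k - Pop k ∘ₗ (Mop i ∘ₗ g) =
        if i = k then Complex.I • g else 0) := by
  have hX₀_commute (k : Fin n) : Commute
      (LinearMap.id + (Complex.I * h * r) • (MvPolynomial.pderiv z).toLinearMap) (Pop k) :=
    ((Commute.one_left _).add_left ((MvPolynomial.commute_pderiv z k).smul_left _)).smul_right _
  have hg_commute (k : Fin n) : Commute g (Pop k) :=
    (MvPolynomial.commute_pderiv_of_eq_sum_pow z k _ g hg).smul_right _
  simp only [← Module.End.mul_eq_comp]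
  refine ⟨?_, fun k hk => ?_, fun i hi => ?_, fun i k _ _ => ?_⟩
  · rw [Mop_mul_mul_Pop_sub_of_commute (hX₀_commute z), if_pos rfl]
  · rw [Mop_mul_mul_Pop_sub_of_commute (hX₀_commute k), if_neg hk.symm]
  · rw [Mop_mul_mul_Pop_sub_of_commute (hg_commute z), if_neg hi]
  · exact Mop_mul_mul_Pop_sub_of_commute (hg_commute k)

/-- Fix `n ≥ 2`, `h ∈ ℂ` and `r ∈ ℂ`, `r ≠ 0`, and let
`X̂⁰ = M₀ ∘ (id + i·h·r·∂₀)` and `X̂ⁱ = M_i ∘ g_r` be the Jordanian realization of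
κ-Minkowski coordinates (with `g_r = Σ_m binom(−1/r, m)·(ihr)^m·∂₀^m`, well defined on
polynomials by local nilpotency of `∂₀`). Together with `P_μ = −i∂_μ` they close the
`r`-deformed phase space relations: `[X̂⁰, P₀] = i·(1 − hrP₀)`, `[X̂⁰, P_k] = 0`,
`[X̂ⁱ, P₀] = 0` and `[X̂ⁱ, P_k] = i·δⁱ_k·(1 − hrP₀)^{−1/r}`. -/
theorem jordanian_twist_deformed_phase_space (n : ℕ) (hn : 2 ≤ n) (h r : ℂ) (hr : r ≠ 0)
    (z : Fin n) (hz : (z : ℕ) = 0)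
    (g : Module.End ℂ (MvPolynomial (Fin n) ℂ))
    (hg : ∀ (f : MvPolynomial (Fin n) ℂ) (N : ℕ), f.totalDegree < N →
      g f = ∑ m ∈ Finset.range N,
        (genBinom (-1 / r) m * (Complex.I * h * r) ^ m) •
          (((MvPolynomial.pderiv z).toLinearMap ^ m) f)) :
    ((Mop z ∘ₗ (LinearMap.id + (Complex.I * h * r) • (MvPolynomial.pderiv z).toLinearMap))
        ∘ₗ Pop z -
      Pop z ∘ₗ
        (Mop z ∘ₗ (LinearMap.id + (Complex.I * h * r) • (MvPolynomial.pderiv z).toLinearMap))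
      = Complex.I •
          (LinearMap.id + (Complex.I * h * r) • (MvPolynomial.pderiv z).toLinearMap)) ∧
    (∀ k : Fin n, k ≠ z →
      (Mop z ∘ₗ (LinearMap.id + (Complex.I * h * r) • (MvPolynomial.pderiv z).toLinearMap))
          ∘ₗ Pop k -
        Pop k ∘ₗ
          (Mop z ∘ₗ (LinearMap.id + (Complex.I * h * r) • (MvPolynomial.pderiv z).toLinearMap))
        = 0) ∧
    (∀ i : Fin n, i ≠ z → (Mop i ∘ₗ g) ∘ₗ Pop z - Pop z ∘ₗ (Mop i ∘ₗ g) = 0) ∧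
    (∀ i k : Fin n, i ≠ z → k ≠ z →
      (Mop i ∘ₗ g) ∘ₗ Pop k - Pop k ∘ₗ (Mop i ∘ₗ g) =
        if i = k then Complex.I • g else 0) :=
  jordanian_twist_deformed_phase_space_general n h r z g hg
end
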